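/- arXiv:2004.01299 — 2 statements merged into one kernel-verified Lean document; each statement's English description precedes it below -/
import Mathlib

section
/- Under the monotonicity assumption (there exists Ω ∈ M_k such that (F ∩ Ω) ⊆ (F' ∩ Ω) implies s(F) ≤ s(F') for all F, F' ∈ M_k), for every f ∈ Ω and g ∉ Ω the inclusion values satisfy IV(f) ≥ IV(g), where IV(h) = (∑_{σ ∈ M_k, h ∈ σ} s(σ)) / C(d-1, k-1). -/
/-!
Exchanging `g` for `f` is a bijection from the `k`-sets containing `g` but not `f` onto those
containing `f` but not `g`. Since `g ∉ Ω`, the exchange can only enlarge the trace on `Ω`, so by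
monotonicity it does not decrease the score; the `k`-sets containing both elements contribute
equally to both inclusion values.
-/

namespace Finset

variable {α : Type*} [DecidableEq α] {a b : α} {σ : Finset α}

theorem card_insert_erase_of_mem_of_notMem (hb : b ∈ σ) (ha : a ∉ σ) :
    (insert a (σ.erase b)).card = σ.card := by
  rw [card_insert_of_notMem fun h => ha (mem_of_mem_erase h), card_erase_add_one hb]

theorem insert_erase_insert_erase (hb : b ∈ σ) (ha : a ∉ σ) :
    insert b ((insert a (σ.erase b)).erase a) = σ := by
  rw [erase_insert fun h => ha (mem_of_mem_erase h), insert_erase hb]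

theorem inter_subset_insert_erase_inter {Ω : Finset α} (hb : b ∉ Ω) :
    σ ∩ Ω ⊆ insert a (σ.erase b) ∩ Ω := fun x hx => by
  obtain ⟨hxσ, hxΩ⟩ := mem_inter.1 hx
  exact mem_inter.2 ⟨mem_insert_of_mem (mem_erase.2 ⟨ne_of_mem_of_not_mem hxΩ hb, hxσ⟩), hxΩ⟩

variable [Fintype α] {k : ℕ}

theorem insert_erase_mem_powersetCard_univ (hσ : σ ∈ powersetCard k univ) (hb : b ∈ σ)
    (ha : a ∉ σ) : insert a (σ.erase b) ∈ powersetCard k univ := by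
  rw [mem_powersetCard_univ, card_insert_erase_of_mem_of_notMem hb ha,
    mem_powersetCard_univ.1 hσ]

theorem insert_erase_mem_filter_powersetCard_univ (hab : a ≠ b)
    (hσ : σ ∈ (powersetCard k univ).filter fun σ => b ∈ σ ∧ a ∉ σ) :
    insert a (σ.erase b) ∈ (powersetCard k univ).filter fun σ => a ∈ σ ∧ b ∉ σ := by
  obtain ⟨hσk, hb, ha⟩ := mem_filter.1 hσ
  exact mem_filter.2 ⟨insert_erase_mem_powersetCard_univ hσk hb ha, mem_insert_self a _,
    by simp [hab.symm]⟩

theorem sum_insert_erase_filter_powersetCard_univ {M : Type*} [AddCommMonoid M] (hab : a ≠ b)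
    (s : Finset α → M) :
    ∑ σ ∈ (powersetCard k univ).filter (fun σ => b ∈ σ ∧ a ∉ σ), s (insert a (σ.erase b)) =
      ∑ σ ∈ (powersetCard k univ).filter (fun σ => a ∈ σ ∧ b ∉ σ), s σ :=
  sum_nbij' (fun σ => insert a (σ.erase b)) (fun σ => insert b (σ.erase a))
    (fun _ hσ => insert_erase_mem_filter_powersetCard_univ hab hσ)
    (fun _ hσ => insert_erase_mem_filter_powersetCard_univ hab.symm hσ)
    (fun _ hσ => by
      obtain ⟨-, hb, ha⟩ := mem_filter.1 hσ
      exact insert_erase_insert_erase hb ha)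
    (fun _ hσ => by
      obtain ⟨-, ha, hb⟩ := mem_filter.1 hσ
      exact insert_erase_insert_erase ha hb)
    fun _ _ => rfl

theorem sum_filter_mem_le_of_le_insert_erase {M : Type*} [AddCommMonoid M] [PartialOrder M]
    [IsOrderedAddMonoid M] (hab : a ≠ b) (s : Finset α → M)
    (hs : ∀ σ ∈ powersetCard k univ, b ∈ σ → a ∉ σ → s σ ≤ s (insert a (σ.erase b))) :
    ∑ σ ∈ (powersetCard k univ).filter (b ∈ ·), s σ ≤
      ∑ σ ∈ (powersetCard k univ).filter (a ∈ ·), s σ := by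
  have split (x y : α) : ∑ σ ∈ (powersetCard k univ).filter (x ∈ ·), s σ =
      ∑ σ ∈ (powersetCard k univ).filter (fun σ => x ∈ σ ∧ y ∈ σ), s σ +
        ∑ σ ∈ (powersetCard k univ).filter (fun σ => x ∈ σ ∧ y ∉ σ), s σ := by
    rw [← sum_filter_add_sum_filter_not _ (y ∈ ·), filter_filter, filter_filter]
  rw [split b a, split a b]
  gcongr ?_ + ?_
  · simp only [and_comm]; rfl
  · calc ∑ σ ∈ (powersetCard k univ).filter (fun σ => b ∈ σ ∧ a ∉ σ), s σ
        ≤ ∑ σ ∈ (powersetCard k univ).filter (fun σ => b ∈ σ ∧ a ∉ σ),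
            s (insert a (σ.erase b)) :=
          sum_le_sum fun σ hσ => by
            obtain ⟨hσk, hb, ha⟩ := mem_filter.1 hσ
            exact hs σ hσk hb ha
      _ = _ := sum_insert_erase_filter_powersetCard_univ hab s

end Finset

theorem inclusion_value_dominant_general (d k : ℕ)
    (s : Finset (Fin d) → ℝ) (Ω : Finset (Fin d))
    (mono : ∀ F ∈ Finset.powersetCard k (Finset.univ : Finset (Fin d)),
      ∀ F' ∈ Finset.powersetCard k (Finset.univ : Finset (Fin d)),
        F ∩ Ω ⊆ F' ∩ Ω → s F ≤ s F')
    (IV : Fin d → ℝ)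
    (hIV : ∀ h : Fin d, IV h =
      (∑ σ ∈ (Finset.powersetCard k (Finset.univ : Finset (Fin d))).filter
          (fun σ => h ∈ σ), s σ) / ((d - 1).choose (k - 1)))
    (f g : Fin d) (hf : f ∈ Ω) (hg : g ∉ Ω) :
    IV g ≤ IV f := by
  have hfg : f ≠ g := fun h => hg (h ▸ hf)
  rw [hIV f, hIV g]
  gcongr 1
  exact Finset.sum_filter_mem_le_of_le_insert_erase hfg s fun σ hσ hgσ hfσ =>
    mono σ hσ _ (Finset.insert_erase_mem_powersetCard_univ hσ hgσ hfσ)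
      (Finset.inter_subset_insert_erase_inter hg)

/-- Under monotonicity, elements of the dominant set Ω have inclusion value at
least as large as elements outside Ω. -/
theorem inclusion_value_dominant (d k : ℕ) (hk : 1 ≤ k) (hkd : k < d)
    (s : Finset (Fin d) → ℝ) (Ω : Finset (Fin d))
    (hΩ : Ω ∈ Finset.powersetCard k (Finset.univ : Finset (Fin d)))
    (mono : ∀ F ∈ Finset.powersetCard k (Finset.univ : Finset (Fin d)),
      ∀ F' ∈ Finset.powersetCard k (Finset.univ : Finset (Fin d)),
        F ∩ Ω ⊆ F' ∩ Ω → s F ≤ s F')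
    (IV : Fin d → ℝ)
    (hIV : ∀ h : Fin d, IV h =
      (∑ σ ∈ (Finset.powersetCard k (Finset.univ : Finset (Fin d))).filter
          (fun σ => h ∈ σ), s σ) / ((d - 1).choose (k - 1)))
    (f g : Fin d) (hf : f ∈ Ω) (hg : g ∉ Ω) :
    IV g ≤ IV f :=
  inclusion_value_dominant_general d k s Ω mono IV hIV f g hf hg
end

section
/- Let s : M_k → ℝ satisfy monotonicity with dominant set Ω, and suppose additionally the top-k inclusion values are attained: then the set of k elements with the k highest inclusion values IV(·) can be chosen to be Ω; formally, there is an ordering of I in which every element of Ω precedes every element of I \ Ω when sorted by IV in decreasing order (with ties broken appropriately), since min_{f∈Ω} IV(f) ≥ max_{g∉Ω} IV(g). -/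
/-!
Let `g ∉ Ω` and let `f` be arbitrary. The transposition `(f g)` maps the `k`-sets containing `g`
bijectively onto those containing `f`, and it cannot shrink the trace on `Ω` of a set containing
`g`, since it only moves `g ∉ Ω` to `f`. By monotonicity each summand of `IV g` is therefore
bounded by the matching summand of `IV f`.
-/

open Finset

variable {α : Type*} [DecidableEq α]

theorem Finset.sum_powersetCard_filter_mem_map_equiv [Fintype α] {M : Type*} [AddCommMonoid M]
    (k : ℕ) (e : α ≃ α) (a : α) (φ : Finset α → M) :
    ∑ σ ∈ (powersetCard k univ).filter (a ∈ ·), φ (σ.map e.toEmbedding) =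
      ∑ σ ∈ (powersetCard k univ).filter (e a ∈ ·), φ σ :=
  sum_equiv e.finsetCongr (fun σ => by simp [Equiv.finsetCongr_apply])
    (fun _ _ => rfl)

theorem Finset.inter_subset_map_swap_inter {Ω σ : Finset α} {g : α} (f : α) (hg : g ∉ Ω)
    (hgσ : g ∈ σ) : σ ∩ Ω ⊆ σ.map (Equiv.swap f g).toEmbedding ∩ Ω := by
  intro x hx
  obtain ⟨hxσ, hxΩ⟩ := mem_inter.mp hx
  refine mem_inter.mpr ⟨mem_map_equiv.mpr ?_, hxΩ⟩
  rw [Equiv.symm_swap]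
  by_cases hxf : x = f
  · rwa [hxf, Equiv.swap_apply_left]
  · rwa [Equiv.swap_apply_of_ne_of_ne hxf (ne_of_mem_of_not_mem hxΩ hg)]

theorem sum_filter_mem_le_of_mono [Fintype α] {k : ℕ} {s : Finset α → ℝ} {Ω : Finset α}
    (mono : ∀ F ∈ powersetCard k univ, ∀ F' ∈ powersetCard k univ, F ∩ Ω ⊆ F' ∩ Ω → s F ≤ s F')
    {g : α} (hg : g ∉ Ω) (f : α) :
    ∑ σ ∈ (powersetCard k univ).filter (g ∈ ·), s σ ≤
      ∑ σ ∈ (powersetCard k univ).filter (f ∈ ·), s σ := by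
  rw [← Equiv.swap_apply_right f g, ← sum_powersetCard_filter_mem_map_equiv]
  refine sum_le_sum fun σ hσ => ?_
  obtain ⟨hσk, hgσ⟩ := mem_filter.mp hσ
  have hσk' : σ.map (Equiv.swap f g).toEmbedding ∈ powersetCard k univ := by
    simpa [mem_powersetCard_univ] using hσk
  exact mono σ hσk _ hσk' (inter_subset_map_swap_inter f hg hgσ)

theorem min_IV_on_Omega_ge_max_IV_off_general (d k : ℕ)
    (s : Finset (Fin d) → ℝ) (Ω : Finset (Fin d))
    (mono : ∀ F ∈ Finset.powersetCard k (Finset.univ : Finset (Fin d)),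
      ∀ F' ∈ Finset.powersetCard k (Finset.univ : Finset (Fin d)),
        F ∩ Ω ⊆ F' ∩ Ω → s F ≤ s F')
    (IV : Fin d → ℝ)
    (hIV : ∀ h : Fin d, IV h =
      (∑ σ ∈ (Finset.powersetCard k (Finset.univ : Finset (Fin d))).filter
          (fun σ => h ∈ σ), s σ) / ((d - 1).choose (k - 1)))
    (hΩne : Ω.Nonempty) (hcne : Ωᶜ.Nonempty) :
    Ωᶜ.sup' hcne IV ≤ Ω.inf' hΩne IV := by
  refine sup'_le _ _ fun g hg => le_inf' _ _ fun f _ => ?_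
  rw [hIV f, hIV g]
  exact div_le_div_of_nonneg_right (sum_filter_mem_le_of_mono mono (mem_compl.mp hg) f)
    (Nat.cast_nonneg _)

/-- Under monotonicity, the minimum inclusion value over Ω is at least the
maximum inclusion value outside Ω, so the top-k elements by inclusion value can
be taken to be Ω. -/
theorem min_IV_on_Omega_ge_max_IV_off (d k : ℕ) (hk : 1 ≤ k) (hkd : k < d)
    (s : Finset (Fin d) → ℝ) (Ω : Finset (Fin d))
    (hΩ : Ω ∈ Finset.powersetCard k (Finset.univ : Finset (Fin d)))
    (mono : ∀ F ∈ Finset.powersetCard k (Finset.univ : Finset (Fin d)),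
      ∀ F' ∈ Finset.powersetCard k (Finset.univ : Finset (Fin d)),
        F ∩ Ω ⊆ F' ∩ Ω → s F ≤ s F')
    (IV : Fin d → ℝ)
    (hIV : ∀ h : Fin d, IV h =
      (∑ σ ∈ (Finset.powersetCard k (Finset.univ : Finset (Fin d))).filter
          (fun σ => h ∈ σ), s σ) / ((d - 1).choose (k - 1)))
    (hΩne : Ω.Nonempty) (hcne : Ωᶜ.Nonempty) :
    Ωᶜ.sup' hcne IV ≤ Ω.inf' hΩne IV :=
  min_IV_on_Omega_ge_max_IV_off_general d k s Ω mono IV hIV hΩne hcne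
end
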